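/- arXiv:1011.6397 — 3 statements merged into one kernel-verified Lean document; each statement's English description precedes it below -/
import Mathlib

section
/- For every vector w in R^n and x drawn uniformly from {-1,1}^n, and every even positive integer k, the k-th moment of |<w,x>| satisfies E[|<w,x>|^k] ≤ k^{k/2} · (E[|<w,x>|^2])^{k/2} = k^{k/2} · ||w||^k. -/
/-!
Expand `(∑ i, w i * ε i) ^ (2 * m)` multinomially. Averaging over the signs kills every monomial
in which some `ε i` has an odd exponent, so the `2m`-th moment is
`∑_{|ν| = m} multinomial (2ν) * ∏ i, (w i ^ 2) ^ ν i`. The bound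
`multinomial (2ν) ≤ m ^ m * multinomial ν` then compares it termwise with the expansion of
`m ^ m * (∑ i, w i ^ 2) ^ m`, and `m ^ m ≤ k ^ (k / 2)` for `k = 2m`. For `m = 1` the same
cancellation gives `E[⟨w, ε⟩ ^ 2] = ‖w‖ ^ 2`.
-/

open Finset

/-- The ±1 value of a boolean bit. -/
def signBit (b : Bool) : ℝ := if b then 1 else -1

section
variable {ι : Type*} [Fintype ι] [DecidableEq ι]

lemma sum_signBit_pow (e : ℕ) :
    ∑ b : Bool, signBit b ^ e = if Even e then 2 else 0 := by
  rcases Nat.even_or_odd e with h | h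
  · simp [signBit, h, h.neg_one_pow]
  · simp [signBit, h.neg_one_pow, Nat.not_even_iff_odd.mpr h]

lemma sum_prod_signBit_pow (μ : ι → ℕ) :
    ∑ x : ι → Bool, ∏ i, signBit (x i) ^ μ i
      = if ∀ i, Even (μ i) then 2 ^ Fintype.card ι else 0 := by
  rw [← Fintype.prod_sum fun i b => signBit b ^ μ i]
  simp_rw [sum_signBit_pow]
  split_ifs with h
  · simp [h]
  · push Not at h
    obtain ⟨i, hi⟩ := h
    exact prod_eq_zero (mem_univ i) (if_neg hi)

lemma sum_signBit_mul_signBit (i j : ι) :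
    ∑ x : ι → Bool, signBit (x i) * signBit (x j) = if i = j then 2 ^ Fintype.card ι else 0 := by
  have hmoment := sum_prod_signBit_pow (Pi.single i 1 + Pi.single j 1 : ι → ℕ)
  have hprod : ∀ x : ι → Bool, ∏ l, signBit (x l) ^ (Pi.single i 1 + Pi.single j 1 : ι → ℕ) l
      = signBit (x i) * signBit (x j) := by
    intro x
    simp only [Pi.add_apply, pow_add, prod_mul_distrib]
    simp [Pi.single_apply, pow_ite]
  simp only [hprod] at hmoment
  rw [hmoment]
  by_cases h : i = j
  · subst h; simp [Pi.single_apply]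
  · rw [if_neg h, if_neg fun hev => ?_]
    simpa [h] using hev i

lemma sum_sq_sum_mul_signBit (w : ι → ℝ) :
    ∑ x : ι → Bool, (∑ i, w i * signBit (x i)) ^ 2 = 2 ^ Fintype.card ι * ∑ i, w i ^ 2 := by
  calc ∑ x : ι → Bool, (∑ i, w i * signBit (x i)) ^ 2
      = ∑ i, ∑ j, w i * w j * ∑ x : ι → Bool, signBit (x i) * signBit (x j) := by
        simp_rw [sq, sum_mul_sum, mul_sum]
        rw [sum_comm]; refine sum_congr rfl fun i _ => ?_
        rw [sum_comm]; refine sum_congr rfl fun j _ => ?_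
        refine sum_congr rfl fun x _ => ?_
        ring
    _ = 2 ^ Fintype.card ι * ∑ i, w i ^ 2 := by
        simp [sum_signBit_mul_signBit, mul_sum, sq, mul_comm]

lemma sum_pow_sum_mul_signBit (w : ι → ℝ) (e : ℕ) :
    ∑ x : ι → Bool, (∑ i, w i * signBit (x i)) ^ e
      = 2 ^ Fintype.card ι * ∑ μ ∈ {μ ∈ piAntidiag univ e | ∀ i, 2 ∣ μ i},
          (Nat.multinomial univ μ : ℝ) * ∏ i, w i ^ μ i := by
  simp_rw [sum_pow_eq_sum_piAntidiag, mul_pow, prod_mul_distrib, ← mul_assoc]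
  rw [sum_comm, sum_filter, mul_sum]
  refine sum_congr rfl fun μ _ => ?_
  rw [← mul_sum, sum_prod_signBit_pow]
  simp only [even_iff_two_dvd]
  split_ifs <;> ring

lemma sum_pow_two_mul_sum_mul_signBit (w : ι → ℝ) (m : ℕ) :
    ∑ x : ι → Bool, (∑ i, w i * signBit (x i)) ^ (2 * m)
      = 2 ^ Fintype.card ι * ∑ ν ∈ piAntidiag univ m,
          (Nat.multinomial univ (2 • ν) : ℝ) * ∏ i, (w i ^ 2) ^ ν i := by
  rw [sum_pow_sum_mul_signBit, ← map_nsmul_piAntidiag_univ m two_ne_zero, sum_map]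
  simp [pow_mul]

lemma sum_pow_two_mul_sum_mul_signBit_le (w : ι → ℝ) (m : ℕ) :
    ∑ x : ι → Bool, (∑ i, w i * signBit (x i)) ^ (2 * m)
      ≤ 2 ^ Fintype.card ι * (m ^ m * (∑ i, w i ^ 2) ^ m) := by
  rw [sum_pow_two_mul_sum_mul_signBit, sum_pow_eq_sum_piAntidiag]
  gcongr 2 ^ _ * ?_
  rw [mul_sum]
  refine sum_le_sum fun ν hν => ?_
  rw [← mul_assoc]
  gcongr ?_ * _
  have hsum : ∑ i, ν i = m := (mem_piAntidiag.1 hν).1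
  exact_mod_cast hsum ▸ Nat.multinomial_two_mul_le_mul_multinomial

end

theorem stmt_0_general (n k : ℕ) (hke : Even k) (w : Fin n → ℝ) :
    ((∑ x : Fin n → Bool, |∑ i, w i * signBit (x i)| ^ k) / 2 ^ n
      ≤ (k : ℝ) ^ (k / 2) *
        ((∑ x : Fin n → Bool, (∑ i, w i * signBit (x i)) ^ 2) / 2 ^ n) ^ (k / 2))
    ∧ (k : ℝ) ^ (k / 2) *
        ((∑ x : Fin n → Bool, (∑ i, w i * signBit (x i)) ^ 2) / 2 ^ n) ^ (k / 2)
      = (k : ℝ) ^ (k / 2) * Real.sqrt (∑ i, w i ^ 2) ^ k := by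
  obtain ⟨m, rfl⟩ := hke
  have hm : (m + m) / 2 = m := by omega
  have second_moment : (∑ x : Fin n → Bool, (∑ i, w i * signBit (x i)) ^ 2) / 2 ^ n
      = ∑ i, w i ^ 2 := by
    rw [sum_sq_sum_mul_signBit, Fintype.card_fin, mul_div_cancel_left₀ _ (by positivity)]
  rw [second_moment, hm, ← two_mul]
  refine ⟨?_, ?_⟩
  · simp_rw [(even_two_mul m).pow_abs]
    rw [div_le_iff₀' (by positivity)]
    calc ∑ x : Fin n → Bool, (∑ i, w i * signBit (x i)) ^ (2 * m)
        ≤ 2 ^ n * (m ^ m * (∑ i, w i ^ 2) ^ m) := by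
          simpa using sum_pow_two_mul_sum_mul_signBit_le w m
      _ ≤ 2 ^ n * ((2 * m : ℕ) ^ m * (∑ i, w i ^ 2) ^ m) := by
          gcongr
          linarith
  · rw [pow_mul, Real.sq_sqrt (sum_nonneg fun i _ => sq_nonneg _)]

/-- Khintchine-Kahane inequality: for `x` uniform on `{-1,1}^n` and `k` even, the `k`-th
moment of `|⟨w,x⟩|` is at most `k^(k/2) * (E[⟨w,x⟩^2])^(k/2) = k^(k/2) * ‖w‖^k`. -/
theorem stmt_0 (n k : ℕ) (hk : 0 < k) (hke : Even k) (w : Fin n → ℝ) :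
    ((∑ x : Fin n → Bool, |∑ i, w i * signBit (x i)| ^ k) / 2 ^ n
      ≤ (k : ℝ) ^ (k / 2) *
        ((∑ x : Fin n → Bool, (∑ i, w i * signBit (x i)) ^ 2) / 2 ^ n) ^ (k / 2))
    ∧ (k : ℝ) ^ (k / 2) *
        ((∑ x : Fin n → Bool, (∑ i, w i * signBit (x i)) ^ 2) / 2 ^ n) ^ (k / 2)
      = (k : ℝ) ^ (k / 2) * Real.sqrt (∑ i, w i ^ 2) ^ k :=
  stmt_0_general n k hke w
end

section
/- Let H be the n×n normalized Hadamard matrix (entries ±1/√n, H^T H = I). Let x ∈ {-1,1}^n be drawn from a k-wise independent distribution (k a positive even integer). Then for every w ∈ R^n with ||w|| = 1 and every α ∈ (0,1/2), Pr[ ||H D(x) w||_∞ > n^{-(1/2-α)} ] ≤ k^{k/2} / n^{αk - 1}, where D(x) is the diagonal matrix with D(x)_{ii} = x_i. -/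
open Finset Matrix
open scoped Classical

lemma expect_prod_signBit (n k : ℕ)
    (p : (Fin n → Bool) → ℝ)
    (hkwise : ∀ s : Finset (Fin n), s.card ≤ k → ∀ g : Fin n → Bool,
      ∑ x ∈ Finset.univ.filter (fun x : Fin n → Bool => ∀ i ∈ s, x i = g i), p x
        = (1 / 2 : ℝ) ^ s.card)
    (s : Finset (Fin n)) (hs : s.card ≤ k) (m : Fin n → ℕ) :
    ∑ x : Fin n → Bool, p x * ∏ j ∈ s, signBit (x j) ^ m j
      = ∏ j ∈ s, (if Even (m j) then (1:ℝ) else 0) := by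
  classical
  -- fiberwise over restriction to s
  have hfib := Finset.sum_fiberwise (Finset.univ : Finset (Fin n → Bool))
      (fun x => (fun i : {i // i ∈ s} => x i.1))
      (fun x => p x * ∏ j ∈ s, signBit (x j) ^ m j)
  rw [← hfib]
  have hstep : ∀ c : {i // i ∈ s} → Bool,
      (∑ x ∈ Finset.univ.filter
          (fun x : Fin n → Bool => (fun i : {i // i ∈ s} => x i.1) = c),
        p x * ∏ j ∈ s, signBit (x j) ^ m j)
      = (1/2:ℝ) ^ s.card * ∏ j ∈ s.attach, signBit (c j) ^ m j.1 := by
    intro c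
    have hset : (Finset.univ.filter
          (fun x : Fin n → Bool => (fun i : {i // i ∈ s} => x i.1) = c))
        = Finset.univ.filter (fun x : Fin n → Bool => ∀ i ∈ s,
            x i = (fun i' => if h : i' ∈ s then c ⟨i', h⟩ else false) i) := by
      ext x
      simp only [Finset.mem_filter, Finset.mem_univ, true_and]
      constructor
      · intro h i hi
        simp only [dif_pos hi]
        exact congrFun h ⟨i, hi⟩
      · intro h
        funext i
        have := h i.1 i.2
        simpa [dif_pos i.2] using this
    have hval : ∀ x ∈ Finset.univ.filter
          (fun x : Fin n → Bool => (fun i : {i // i ∈ s} => x i.1) = c),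
        p x * ∏ j ∈ s, signBit (x j) ^ m j
          = p x * ∏ j ∈ s.attach, signBit (c j) ^ m j.1 := by
      intro x hx
      simp only [Finset.mem_filter] at hx
      congr 1
      rw [← Finset.prod_attach s (fun j => signBit (x j) ^ m j)]
      refine Finset.prod_congr rfl fun j _ => ?_
      rw [← congrFun hx.2 j]
    rw [Finset.sum_congr rfl hval, ← Finset.sum_mul, hset, hkwise s hs]
  rw [Finset.sum_congr rfl (fun c _ => hstep c), ← Finset.mul_sum]
  -- now sum over all c of the product
  have hexp : (∑ c : {i // i ∈ s} → Bool, ∏ j ∈ s.attach, signBit (c j) ^ m j.1)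
      = ∏ j ∈ s.attach, (∑ b : Bool, signBit b ^ m j.1) := by
    rw [Finset.attach_eq_univ]
    have h2 := Finset.prod_univ_sum (κ := fun _ : {i // i ∈ s} => Bool)
        (fun _ => (Finset.univ : Finset Bool)) (fun j b => signBit b ^ m j.1)
    rw [Fintype.piFinset_univ] at h2
    exact h2.symm
  rw [hexp]
  have hbool : ∀ j : {i // i ∈ s}, (∑ b : Bool, signBit b ^ m j.1)
      = if Even (m j.1) then (2:ℝ) else 0 := by
    intro j
    rcases Nat.even_or_odd (m j.1) with he | ho
    · simp [signBit, he.neg_one_pow, if_pos he]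
    · simp [signBit, ho.neg_one_pow, if_neg (Nat.not_even_iff_odd.mpr ho)]
  rw [Finset.prod_congr rfl (fun j _ => hbool j)]
  rw [← Finset.prod_attach s (fun j => if Even (m j) then (1:ℝ) else 0)]
  have hcard : ((1:ℝ)/2) ^ s.card = ∏ _j ∈ s.attach, ((1:ℝ)/2) := by
    rw [Finset.prod_const, Finset.card_attach]
  rw [hcard, ← Finset.prod_mul_distrib]
  refine Finset.prod_congr rfl fun j _ => ?_
  by_cases h : Even (m j.1) <;> simp [h] <;> norm_num

lemma natA (l : ℕ) : ∀ r, r ≤ l → (l + r).factorial ≤ (l + l) ^ r * l.factorial := by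
  intro r
  induction r with
  | zero => simp
  | succ r ih =>
    intro h
    have h1 : l + (r+1) = (l + r) + 1 := by ring
    rw [h1, Nat.factorial_succ]
    calc (l + r + 1) * (l + r).factorial ≤ (l + l) * ((l + l) ^ r * l.factorial) := by
          apply Nat.mul_le_mul
          · omega
          · exact ih (by omega)
      _ = (l + l) ^ (r + 1) * l.factorial := by ring
  
lemma natB (n l : ℕ) (m : Fin n → ℕ) (hsum : ∑ j, m j = l + l)
    (hev : ∀ j, Even (m j)) :
    Nat.multinomial Finset.univ m ≤ (l + l) ^ l * Nat.multinomial Finset.univ (fun j => m j / 2) := by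
  classical
  set h : Fin n → ℕ := fun j => m j / 2 with hh
  have hsum2 : ∑ j, h j = l := by
    have : 2 * ∑ j, h j = ∑ j, m j := by
      rw [Finset.mul_sum]
      refine Finset.sum_congr rfl fun j _ => ?_
      exact Nat.two_mul_div_two_of_even (hev j)
    omega
  have spec1 : (∏ j, (m j).factorial) * Nat.multinomial Finset.univ m = (l + l).factorial := by
    have := Nat.multinomial_spec (Finset.univ : Finset (Fin n)) m
    rwa [hsum] at this
  have spec2 : (∏ j, (h j).factorial) * Nat.multinomial Finset.univ h = l.factorial := by
    have := Nat.multinomial_spec (Finset.univ : Finset (Fin n)) h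
    rwa [hsum2] at this
  have hprodle : (∏ j, (h j).factorial) ≤ ∏ j, (m j).factorial :=
    Finset.prod_le_prod' fun j _ => Nat.factorial_le (Nat.div_le_self _ _)
  have hpos : 0 < (∏ j, (m j).factorial) * l.factorial :=
    Nat.mul_pos (Finset.prod_pos fun j _ => Nat.factorial_pos _) (Nat.factorial_pos _)
  refine Nat.le_of_mul_le_mul_right ?_ hpos
  calc Nat.multinomial Finset.univ m * ((∏ j, (m j).factorial) * l.factorial)
      = ((∏ j, (m j).factorial) * Nat.multinomial Finset.univ m) * l.factorial := by ring
    _ = (l + l).factorial * l.factorial := by rw [spec1]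
    _ ≤ ((l + l) ^ l * l.factorial) * l.factorial := by
        exact Nat.mul_le_mul_right _ (natA l l le_rfl)
    _ = (l + l) ^ l * (l.factorial * l.factorial) := by ring
    _ = (l + l) ^ l * (((∏ j, (h j).factorial) * Nat.multinomial Finset.univ h) * l.factorial) := by
        rw [spec2]
    _ ≤ (l + l) ^ l * (((∏ j, (m j).factorial) * Nat.multinomial Finset.univ h) * l.factorial) := by
        apply Nat.mul_le_mul_left
        exact Nat.mul_le_mul_right _ (Nat.mul_le_mul_right _ hprodle)
    _ = (l + l) ^ l * Nat.multinomial Finset.univ h * ((∏ j, (m j).factorial) * l.factorial) := by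
        ring

lemma moment_bound (n k l : ℕ) (hkl : k = l + l)
    (p : (Fin n → Bool) → ℝ) (hp0 : ∀ x, 0 ≤ p x)
    (hkwise : ∀ s : Finset (Fin n), s.card ≤ k → ∀ g : Fin n → Bool,
      ∑ x ∈ Finset.univ.filter (fun x : Fin n → Bool => ∀ i ∈ s, x i = g i), p x
        = (1 / 2 : ℝ) ^ s.card)
    (a : Fin n → ℝ) :
    ∑ x : Fin n → Bool, p x * (∑ j, a j * signBit (x j)) ^ k
      ≤ ((l + l) ^ l : ℕ) * (∑ j, a j ^ 2) ^ l := by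
  classical
  have step1 : ∀ x : Fin n → Bool, (∑ j, a j * signBit (x j)) ^ k
      = ∑ m ∈ piAntidiag Finset.univ k,
          (Nat.multinomial Finset.univ m : ℝ) * (∏ j, a j ^ m j)
            * ∏ j, signBit (x j) ^ m j := by
    intro x
    rw [Finset.sum_pow_eq_sum_piAntidiag]
    refine Finset.sum_congr rfl fun m _ => ?_
    rw [mul_assoc, ← Finset.prod_mul_distrib]
    congr 1
    exact Finset.prod_congr rfl fun j _ => mul_pow _ _ _
  have step2 : ∑ x : Fin n → Bool, p x * (∑ j, a j * signBit (x j)) ^ k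
      = ∑ m ∈ piAntidiag Finset.univ k,
          (Nat.multinomial Finset.univ m : ℝ) * (∏ j, a j ^ m j)
            * ∑ x : Fin n → Bool, p x * ∏ j, signBit (x j) ^ m j := by
    simp_rw [step1, Finset.mul_sum]
    rw [Finset.sum_comm]
    refine Finset.sum_congr rfl fun m _ => ?_
    refine Finset.sum_congr rfl fun x _ => ?_
    ring
  rw [step2]
  have step3 : ∀ m ∈ piAntidiag Finset.univ k,
      (∑ x : Fin n → Bool, p x * ∏ j, signBit (x j) ^ m j)
        = ∏ j, (if Even (m j) then (1:ℝ) else 0) := by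
    intro m hm
    rw [Finset.mem_piAntidiag] at hm
    set s : Finset (Fin n) := Finset.univ.filter (fun j => m j ≠ 0) with hsdef
    have hcard : s.card ≤ k := by
      calc s.card = ∑ j ∈ s, 1 := by rw [Finset.card_eq_sum_ones]
        _ ≤ ∑ j ∈ s, m j := Finset.sum_le_sum fun j hj => by
            rw [hsdef] at hj
            simp only [Finset.mem_filter] at hj
            omega
        _ ≤ ∑ j, m j := Finset.sum_le_sum_of_subset (Finset.filter_subset _ _)
        _ = k := hm.1
    have h1 : ∀ x : Fin n → Bool, ∏ j, signBit (x j) ^ m j = ∏ j ∈ s, signBit (x j) ^ m j := by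
      intro x
      refine (Finset.prod_filter_of_ne fun j _ hne => ?_).symm
      intro h0
      exact hne (by rw [h0, pow_zero])
    have h2 : (∏ j, (if Even (m j) then (1:ℝ) else 0))
        = ∏ j ∈ s, (if Even (m j) then (1:ℝ) else 0) := by
      refine (Finset.prod_filter_of_ne fun j _ hne => ?_).symm
      intro h0
      exact hne (by rw [h0]; simp)
    simp_rw [h1]
    rw [expect_prod_signBit n k p hkwise s hcard m, h2]
  rw [Finset.sum_congr rfl fun m hm => by rw [step3 m hm]]
  -- termwise bound
  have hbound : ∀ m ∈ piAntidiag Finset.univ k,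
      (Nat.multinomial Finset.univ m : ℝ) * (∏ j, a j ^ m j)
          * ∏ j, (if Even (m j) then (1:ℝ) else 0)
        ≤ if (∀ j, Even (m j)) then
            (((l + l) ^ l : ℕ) : ℝ) * ((Nat.multinomial Finset.univ (fun j => m j / 2) : ℝ)
              * ∏ j, (a j ^ 2) ^ (m j / 2)) else 0 := by
    intro m hm
    rw [Finset.mem_piAntidiag] at hm
    by_cases hP : ∀ j, Even (m j)
    · rw [if_pos hP]
      have hones : (∏ j, (if Even (m j) then (1:ℝ) else 0)) = 1 :=
        Finset.prod_eq_one fun j _ => if_pos (hP j)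
      rw [hones, mul_one]
      have hsq : (∏ j, a j ^ m j) = ∏ j, (a j ^ 2) ^ (m j / 2) := by
        refine Finset.prod_congr rfl fun j _ => ?_
        rw [← pow_mul]
        congr 1
        exact (Nat.two_mul_div_two_of_even (hP j)).symm
      rw [hsq, ← mul_assoc]
      apply mul_le_mul_of_nonneg_right
      · have hnb := natB n l m (by rw [hkl] at hm; exact hm.1) hP
        calc (Nat.multinomial Finset.univ m : ℝ)
            ≤ (((l + l) ^ l * Nat.multinomial Finset.univ (fun j => m j / 2) : ℕ) : ℝ) := by
              exact_mod_cast hnb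
          _ = _ := by push_cast; ring
      · positivity
    · rw [if_neg hP]
      push_neg at hP
      obtain ⟨j0, hj0⟩ := hP
      have hz : (∏ j, (if Even (m j) then (1:ℝ) else 0)) = 0 :=
        Finset.prod_eq_zero (Finset.mem_univ j0) (if_neg hj0)
      rw [hz, mul_zero]
  calc (∑ m ∈ piAntidiag Finset.univ k,
        (Nat.multinomial Finset.univ m : ℝ) * (∏ j, a j ^ m j)
          * ∏ j, (if Even (m j) then (1:ℝ) else 0))
      ≤ ∑ m ∈ piAntidiag Finset.univ k,
          if (∀ j, Even (m j)) then
            (((l + l) ^ l : ℕ) : ℝ) * ((Nat.multinomial Finset.univ (fun j => m j / 2) : ℝ)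
              * ∏ j, (a j ^ 2) ^ (m j / 2)) else 0 := Finset.sum_le_sum hbound
    _ = ∑ m ∈ (piAntidiag Finset.univ k).filter (fun m => ∀ j, Even (m j)),
          (((l + l) ^ l : ℕ) : ℝ) * ((Nat.multinomial Finset.univ (fun j => m j / 2) : ℝ)
            * ∏ j, (a j ^ 2) ^ (m j / 2)) := (Finset.sum_filter _ _).symm
    _ = ∑ m' ∈ piAntidiag Finset.univ l,
          (((l + l) ^ l : ℕ) : ℝ) * ((Nat.multinomial Finset.univ m' : ℝ)
            * ∏ j, (a j ^ 2) ^ (m' j)) := by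
        refine Finset.sum_nbij' (fun m => fun j => m j / 2) (fun m' => fun j => 2 * m' j)
          ?_ ?_ ?_ ?_ ?_
        · intro m hm
          simp only [Finset.mem_filter, Finset.mem_piAntidiag] at hm
          rw [Finset.mem_piAntidiag]
          refine ⟨?_, fun _ _ => Finset.mem_univ _⟩
          show (∑ j, m j / 2) = l
          have h2 : 2 * ∑ j, m j / 2 = ∑ j, m j := by
            rw [Finset.mul_sum]
            exact Finset.sum_congr rfl fun j _ => Nat.two_mul_div_two_of_even (hm.2 j)
          have h3 : (∑ j, m j) = l + l := by rw [← hkl]; exact hm.1.1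
          omega
        · intro m' hm'
          rw [Finset.mem_piAntidiag] at hm'
          simp only [Finset.mem_filter, Finset.mem_piAntidiag]
          refine ⟨⟨?_, fun _ _ => Finset.mem_univ _⟩, fun j => ⟨m' j, by ring⟩⟩
          show (∑ j, 2 * m' j) = k
          rw [← Finset.mul_sum, hm'.1]
          omega
        · intro m hm
          simp only [Finset.mem_filter] at hm
          funext j
          show 2 * (m j / 2) = m j
          exact Nat.two_mul_div_two_of_even (hm.2 j)
        · intro m' _
          funext j
          show 2 * m' j / 2 = m' j
          omega
        · intro m _
          rfl
    _ = (((l + l) ^ l : ℕ) : ℝ) * ∑ m' ∈ piAntidiag Finset.univ l,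
          (Nat.multinomial Finset.univ m' : ℝ) * ∏ j, (a j ^ 2) ^ (m' j) := by
        rw [Finset.mul_sum]
    _ = ((l + l) ^ l : ℕ) * (∑ j, a j ^ 2) ^ l := by
        rw [← Finset.sum_pow_eq_sum_piAntidiag]

/-- Regularization lemma: for the normalized Hadamard matrix `H`, a `k`-wise independent
sign vector `x`, and a unit vector `w`,
`Pr[ ‖H D(x) w‖_∞ > n^(-(1/2-α)) ] ≤ k^(k/2) / n^(αk - 1)`. -/
theorem stmt_1 (n k : ℕ) (hn : 0 < n) (hk : 0 < k) (hke : Even k)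
    (α : ℝ) (hα0 : 0 < α) (hα : α < 1 / 2)
    (H : Matrix (Fin n) (Fin n) ℝ)
    (hHent : ∀ i j, H i j = 1 / Real.sqrt n ∨ H i j = -(1 / Real.sqrt n))
    (hHorth : Hᵀ * H = 1)
    (p : (Fin n → Bool) → ℝ) (hp0 : ∀ x, 0 ≤ p x) (hp1 : ∑ x, p x = 1)
    (hkwise : ∀ s : Finset (Fin n), s.card ≤ k → ∀ g : Fin n → Bool,
      ∑ x ∈ Finset.univ.filter (fun x : Fin n → Bool => ∀ i ∈ s, x i = g i), p x
        = (1 / 2 : ℝ) ^ s.card)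
    (w : Fin n → ℝ) (hw : ∑ i, w i ^ 2 = 1) :
    ∑ x ∈ Finset.univ.filter (fun x : Fin n → Bool =>
        ∃ i, (n : ℝ) ^ (-((1 : ℝ) / 2 - α))
          < |(H.mulVec (fun j => signBit (x j) * w j)) i|), p x
      ≤ (k : ℝ) ^ ((k : ℝ) / 2) / (n : ℝ) ^ (α * k - 1) := by
  classical
  obtain ⟨l, hkl⟩ := hke
  have hN0 : (0:ℝ) < (n:ℝ) := by exact_mod_cast hn
  set t : ℝ := (n : ℝ) ^ (-((1 : ℝ) / 2 - α)) with htdef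
  have ht0 : 0 < t := Real.rpow_pos_of_pos hN0 _
  set y : Fin n → (Fin n → Bool) → ℝ :=
    fun i x => (H.mulVec (fun j => signBit (x j) * w j)) i with hy
  -- union bound
  have hunion : ∑ x ∈ Finset.univ.filter (fun x : Fin n → Bool => ∃ i, t < |y i x|), p x
      ≤ ∑ i : Fin n, ∑ x ∈ Finset.univ.filter (fun x : Fin n → Bool => t < |y i x|), p x := by
    calc ∑ x ∈ Finset.univ.filter (fun x : Fin n → Bool => ∃ i, t < |y i x|), p x
        ≤ ∑ x ∈ Finset.univ.filter (fun x : Fin n → Bool => ∃ i, t < |y i x|),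
            ∑ i : Fin n, (if t < |y i x| then p x else 0) := by
          refine Finset.sum_le_sum fun x hx => ?_
          simp only [Finset.mem_filter] at hx
          obtain ⟨i0, hi0⟩ := hx.2
          exact le_trans (if_pos hi0).ge
            (Finset.single_le_sum (f := fun i => if t < |y i x| then p x else 0)
              (fun i _ => by by_cases h : t < |y i x| <;> simp [h, hp0 x])
              (Finset.mem_univ i0))
      _ ≤ ∑ x : Fin n → Bool, ∑ i : Fin n, (if t < |y i x| then p x else 0) := by
          refine Finset.sum_le_sum_of_subset_of_nonneg (Finset.filter_subset _ _) ?_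
          intro x _ _
          exact Finset.sum_nonneg fun i _ => by
            by_cases h : t < |y i x| <;> simp [h, hp0 x]
      _ = ∑ i : Fin n, ∑ x : Fin n → Bool, (if t < |y i x| then p x else 0) :=
          Finset.sum_comm
      _ = ∑ i : Fin n, ∑ x ∈ Finset.univ.filter (fun x : Fin n → Bool => t < |y i x|), p x := by
          refine Finset.sum_congr rfl fun i _ => (Finset.sum_filter _ _).symm
  -- Markov for each coordinate
  have hmarkov : ∀ i : Fin n,
      ∑ x ∈ Finset.univ.filter (fun x : Fin n → Bool => t < |y i x|), p x
        ≤ (1 / t ^ k) * ∑ x : Fin n → Bool, p x * (y i x) ^ k := by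
    intro i
    have hek : Even k := ⟨l, hkl⟩
    calc ∑ x ∈ Finset.univ.filter (fun x : Fin n → Bool => t < |y i x|), p x
        ≤ ∑ x ∈ Finset.univ.filter (fun x : Fin n → Bool => t < |y i x|),
            (1 / t ^ k) * (p x * (y i x) ^ k) := by
          refine Finset.sum_le_sum fun x hx => ?_
          simp only [Finset.mem_filter] at hx
          have h1 : t ^ k ≤ (y i x) ^ k := by
            rw [← hek.pow_abs (y i x)]
            exact pow_le_pow_left₀ ht0.le hx.2.le k
          have htk : 0 < t ^ k := pow_pos ht0 k
          rw [one_div, mul_comm (t ^ k)⁻¹, mul_assoc, ← div_eq_mul_inv]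
          have : (1:ℝ) ≤ (y i x) ^ k / t ^ k := (one_le_div htk).mpr h1
          calc p x = p x * 1 := (mul_one _).symm
            _ ≤ p x * ((y i x) ^ k / t ^ k) := mul_le_mul_of_nonneg_left this (hp0 x)
      _ ≤ ∑ x : Fin n → Bool, (1 / t ^ k) * (p x * (y i x) ^ k) := by
          refine Finset.sum_le_sum_of_subset_of_nonneg (Finset.filter_subset _ _) ?_
          intro x _ _
          exact mul_nonneg (by positivity) (mul_nonneg (hp0 x) (hek.pow_nonneg _))
      _ = (1 / t ^ k) * ∑ x : Fin n → Bool, p x * (y i x) ^ k := by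
          rw [Finset.mul_sum]
  -- moment bound applied with a j = H i j * w j
  have hmom : ∀ i : Fin n,
      ∑ x : Fin n → Bool, p x * (y i x) ^ k
        ≤ ((l + l) ^ l : ℕ) * ((1 : ℝ) / n) ^ l := by
    intro i
    have hyx : ∀ x, y i x = ∑ j, (H i j * w j) * signBit (x j) := by
      intro x
      rw [hy]
      simp only [Matrix.mulVec, dotProduct]
      exact Finset.sum_congr rfl fun j _ => by ring
    have hsq : (∑ j, (H i j * w j) ^ 2) = (1:ℝ)/n := by
      have : ∀ j, (H i j * w j) ^ 2 = (1/n) * w j ^ 2 := by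
        intro j
        have h2 : (H i j) ^ 2 = 1 / n := by
          rcases hHent i j with h | h <;> rw [h]
          · rw [div_pow, one_pow, Real.sq_sqrt (Nat.cast_nonneg n)]
          · rw [neg_pow, div_pow, one_pow, Real.sq_sqrt (Nat.cast_nonneg n)]
            norm_num
        rw [mul_pow, h2]
      rw [Finset.sum_congr rfl fun j _ => this j, ← Finset.mul_sum, hw, mul_one]
    simp_rw [hyx]
    have := moment_bound n k l hkl p hp0 hkwise (fun j => H i j * w j)
    rwa [hsq] at this
  -- combine
  have hcomb : ∑ x ∈ Finset.univ.filter (fun x : Fin n → Bool => ∃ i, t < |y i x|), p x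
      ≤ (n : ℝ) * ((1 / t ^ k) * (((l + l) ^ l : ℕ) * ((1:ℝ)/n) ^ l)) := by
    refine hunion.trans ?_
    calc ∑ i : Fin n, ∑ x ∈ Finset.univ.filter (fun x : Fin n → Bool => t < |y i x|), p x
        ≤ ∑ _i : Fin n, (1 / t ^ k) * (((l + l) ^ l : ℕ) * ((1:ℝ)/n) ^ l) := by
          refine Finset.sum_le_sum fun i _ => ?_
          refine (hmarkov i).trans ?_
          exact mul_le_mul_of_nonneg_left (hmom i) (by positivity)
      _ = (n : ℝ) * ((1 / t ^ k) * (((l + l) ^ l : ℕ) * ((1:ℝ)/n) ^ l)) := by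
          rw [Finset.sum_const, Finset.card_univ, Fintype.card_fin, nsmul_eq_mul]
  refine hcomb.trans ?_
  -- final arithmetic (equality)
  have hl : (l : ℝ) = (k : ℝ) / 2 := by
    have : (k:ℝ) = (l:ℝ) + (l:ℝ) := by exact_mod_cast congrArg (Nat.cast (R := ℝ)) hkl
    linarith
  have hC : (((l + l) ^ l : ℕ) : ℝ) = (k:ℝ) ^ ((k:ℝ)/2) := by
    rw [← hkl]
    push_cast
    rw [← Real.rpow_natCast (k:ℝ) l, hl]
  rw [hC]
  have hkey : (n:ℝ) * ((1 / t ^ k) * ((1:ℝ)/n) ^ l) = 1 / (n:ℝ) ^ (α * k - 1) := by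
    have h1 : t ^ k = (n:ℝ) ^ ((-((1:ℝ)/2 - α)) * k) := by
      rw [htdef, ← Real.rpow_natCast ((n:ℝ) ^ (-((1:ℝ)/2 - α))) k, ← Real.rpow_mul hN0.le]
    have h2 : ((1:ℝ)/n) ^ l = (n:ℝ) ^ (-(l:ℝ)) := by
      rw [one_div, ← Real.rpow_natCast ((n:ℝ)⁻¹) l, ← Real.rpow_neg_one (n:ℝ),
        ← Real.rpow_mul hN0.le]
      norm_num
    rw [h1, h2, one_div, ← Real.rpow_neg hN0.le]
    nth_rewrite 1 [show (n:ℝ) = (n:ℝ) ^ (1:ℝ) from (Real.rpow_one _).symm]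
    rw [← Real.rpow_add hN0, ← Real.rpow_add hN0,
      one_div ((n:ℝ) ^ (α * (k:ℝ) - 1)), ← Real.rpow_neg hN0.le]
    congr 1
    rw [hl]
    ring
  refine le_of_eq ?_
  calc (n : ℝ) * ((1 / t ^ k) * ((k:ℝ) ^ ((k:ℝ)/2) * ((1:ℝ)/n) ^ l))
      = (k:ℝ) ^ ((k:ℝ)/2) * ((n:ℝ) * ((1 / t ^ k) * ((1:ℝ)/n) ^ l)) := by ring
    _ = (k:ℝ) ^ ((k:ℝ)/2) * (1 / (n:ℝ) ^ (α * k - 1)) := by rw [hkey]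
    _ = (k : ℝ) ^ ((k : ℝ) / 2) / (n : ℝ) ^ (α * k - 1) := by rw [mul_one_div]
end

section
/- Let 𝒮 be a collection of subsets of [n] each of size s such that for every f : [n] → [0, n^{1/4}], Pr_{S∈_u 𝒮}[ |(1/s)∑_{i∈S} f(i) − (1/n)∑_i f(i)| > ε ] ≤ δ. Let 𝒟 be a k-wise independent distribution on {-1,1}^n (k even). For S ∈_u 𝒮 and x ← 𝒟 independent, define A_{S,x} = √(n/s)·P_S·H·D(x). Then for every w ∈ R^n with ||w|| = 1, Pr[ | ||A_{S,x} w||² − 1 | ≥ ε ] ≤ δ + k^{k/2}/n^{k/8−1}. -/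
open Finset Matrix
open scoped Classical

/-- swap within pairs (0,1),(2,3),... -/
def swapIdx {c : ℕ} (j : Fin c) : Fin c :=
  if h2 : j.val % 2 = 0 then
    (if h : j.val + 1 < c then ⟨j.val + 1, h⟩ else j)
  else ⟨j.val - 1, lt_of_le_of_lt (Nat.sub_le _ _) j.isLt⟩

lemma swapIdx_val_even {c : ℕ} (hc : Even c) (j : Fin c) (h2 : j.val % 2 = 0) :
    (swapIdx j).val = j.val + 1 := by
  have hlt : j.val + 1 < c := by
    rcases Nat.lt_or_ge (j.val + 1) c with h | h
    · exact h
    · exfalso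
      have : j.val + 1 = c := le_antisymm j.isLt h
      obtain ⟨t, ht⟩ := hc
      omega
  simp [swapIdx, h2, hlt]

lemma swapIdx_val_odd {c : ℕ} (j : Fin c) (h2 : ¬ j.val % 2 = 0) :
    (swapIdx j).val = j.val - 1 := by
  simp [swapIdx, h2]

lemma swapIdx_ne {c : ℕ} (hc : Even c) (j : Fin c) : swapIdx j ≠ j := by
  intro h
  apply_fun Fin.val at h
  by_cases h2 : j.val % 2 = 0
  · rw [swapIdx_val_even hc j h2] at h; omega
  · rw [swapIdx_val_odd j h2] at h; omega

lemma swapIdx_swapIdx {c : ℕ} (hc : Even c) (j : Fin c) : swapIdx (swapIdx j) = j := by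
  apply Fin.ext
  by_cases h2 : j.val % 2 = 0
  · have h1 := swapIdx_val_even hc j h2
    have h3 : ¬ (swapIdx j).val % 2 = 0 := by omega
    rw [swapIdx_val_odd _ h3, h1]
    omega
  · have h1 := swapIdx_val_odd j h2
    have h3 : (swapIdx j).val % 2 = 0 := by omega
    rw [swapIdx_val_even hc _ h3, h1]
    omega

/-- canonical partner of `l` inside finset `s` (junk if `l ∉ s`). -/
noncomputable def pairIn {α : Type*} [LinearOrder α] (s : Finset α) (l : α) : α :=
  if hl : l ∈ s then (s.orderIsoOfFin rfl (swapIdx ((s.orderIsoOfFin rfl).symm ⟨l, hl⟩)) : α)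
  else l

lemma pairIn_mem {α : Type*} [LinearOrder α] {s : Finset α} {l : α} (hl : l ∈ s) :
    pairIn s l ∈ s := by
  simp only [pairIn, dif_pos hl]; exact Subtype.mem _

lemma pairIn_ne {α : Type*} [LinearOrder α] {s : Finset α} (hc : Even s.card) {l : α}
    (hl : l ∈ s) : pairIn s l ≠ l := by
  simp only [pairIn, dif_pos hl]
  intro h
  have : (s.orderIsoOfFin rfl) (swapIdx ((s.orderIsoOfFin rfl).symm ⟨l, hl⟩))
      = (s.orderIsoOfFin rfl) ((s.orderIsoOfFin rfl).symm ⟨l, hl⟩) := by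
    rw [OrderIso.apply_symm_apply]; exact Subtype.ext h
  have := (s.orderIsoOfFin rfl).injective this
  exact swapIdx_ne hc _ this

lemma pairIn_pairIn {α : Type*} [LinearOrder α] {s : Finset α} (hc : Even s.card) {l : α}
    (hl : l ∈ s) : pairIn s (pairIn s l) = l := by
  have h1 : pairIn s l ∈ s := pairIn_mem hl
  conv_lhs => rw [pairIn, dif_pos h1]
  have h2 : (⟨pairIn s l, h1⟩ : {x // x ∈ s})
      = (s.orderIsoOfFin rfl) (swapIdx ((s.orderIsoOfFin rfl).symm ⟨l, hl⟩)) := by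
    apply Subtype.ext
    simp only [pairIn, dif_pos hl]
  rw [h2, OrderIso.symm_apply_apply, swapIdx_swapIdx hc, OrderIso.apply_symm_apply]

section
variable {α β : Type*} [Fintype α] [LinearOrder α] [DecidableEq α] [DecidableEq β]

/-- canonical fixed-point-free involution preserving `f`, for even-fibered `f`. -/
noncomputable def invo (f : α → β) (l : α) : α :=
  pairIn (univ.filter fun m => f m = f l) l

/-- all fibers have even cardinality -/
def EvenFibers (f : α → β) : Prop := ∀ b, Even (univ.filter fun m => f m = b).card

variable {f : α → β}

lemma invo_mem_fiber (f : α → β) (l : α) :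
    invo f l ∈ univ.filter fun m => f m = f l := pairIn_mem (by simp)

lemma f_invo (f : α → β) (l : α) : f (invo f l) = f l :=
  (mem_filter.mp (invo_mem_fiber f l)).2

lemma invo_ne (hE : EvenFibers f) (l : α) : invo f l ≠ l :=
  pairIn_ne (hE (f l)) (by simp)

lemma invo_invo (hE : EvenFibers f) (l : α) : invo f (invo f l) = l := by
  have hset : (univ.filter fun m => f m = f (invo f l)) = (univ.filter fun m => f m = f l) := by
    rw [f_invo f l]
  show pairIn (univ.filter fun m => f m = f (invo f l)) (invo f l) = l
  rw [hset]
  exact pairIn_pairIn (hE (f l)) (by simp)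

lemma invo_injective (hE : EvenFibers f) : Function.Injective (invo f) :=
  Function.Involutive.injective (invo_invo hE)

/-- left endpoints of pairs -/
noncomputable def Lset (f : α → β) : Finset α := univ.filter fun l => l < invo f l
/-- right endpoints of pairs -/
noncomputable def Rset (f : α → β) : Finset α := univ.filter fun l => invo f l < l

lemma mem_Lset {l : α} : l ∈ Lset f ↔ l < invo f l := by simp [Lset]
lemma mem_Rset {l : α} : l ∈ Rset f ↔ invo f l < l := by simp [Rset]

lemma Lset_disj_Rset : Disjoint (Lset f) (Rset f) := by
  rw [Finset.disjoint_left]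
  intro l hl hr
  rw [mem_Lset] at hl; rw [mem_Rset] at hr
  exact absurd (hl.trans hr) (lt_irrefl l)

lemma Lset_union_Rset (hE : EvenFibers f) : Lset f ∪ Rset f = univ := by
  ext l
  simp only [mem_union, mem_Lset, mem_Rset, mem_univ, iff_true]
  rcases lt_trichotomy l (invo f l) with h | h | h
  · exact Or.inl h
  · exact absurd h.symm (invo_ne hE l)
  · exact Or.inr h

lemma Rset_eq_image (hE : EvenFibers f) : Rset f = (Lset f).image (invo f) := by
  ext x
  simp only [mem_Rset, mem_image, mem_Lset]
  constructor
  · intro hx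
    exact ⟨invo f x, by rw [invo_invo hE]; exact hx, invo_invo hE x⟩
  · rintro ⟨l, hl, rfl⟩
    rw [invo_invo hE]; exact hl

lemma Lset_eq_sdiff (hE : EvenFibers f) : Lset f = univ \ Rset f := by
  ext l
  simp only [mem_sdiff, mem_univ, true_and, mem_Lset, mem_Rset]
  constructor
  · intro h; exact not_lt_of_gt h
  · intro h
    rcases lt_trichotomy l (invo f l) with h1 | h1 | h1
    · exact h1
    · exact absurd h1.symm (invo_ne hE l)
    · exact absurd h1 h

lemma card_Lset (hE : EvenFibers f) {m : ℕ} (hm : Fintype.card α = 2 * m) :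
    (Lset f).card = m := by
  have h1 : (Rset f).card = (Lset f).card := by
    rw [Rset_eq_image hE]
    exact Finset.card_image_of_injective _ (invo_injective hE)
  have h2 : (Lset f).card + (Rset f).card = Fintype.card α := by
    rw [← Finset.card_union_of_disjoint Lset_disj_Rset, Lset_union_Rset hE, card_univ]
  omega

end
section
variable {k n m : ℕ}

/-- enumerate a finset of `Fin k`, assuming its card is `m`; junk otherwise. -/
noncomputable def enumF (s : Finset (Fin k)) (l0 : Fin k) : Fin m → Fin k :=
  if h : s.card = m then fun i => (s.orderIsoOfFin h i : Fin k) else fun _ => l0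

lemma enumF_mem {s : Finset (Fin k)} (h : s.card = m) (l0 : Fin k) (i : Fin m) :
    enumF s l0 i ∈ s := by
  simp only [enumF, dif_pos h]; exact Subtype.mem _

lemma enumF_inj {s : Finset (Fin k)} (h : s.card = m) (l0 : Fin k) :
    Function.Injective (enumF s l0 : Fin m → Fin k) := by
  intro i j hij
  simp only [enumF, dif_pos h] at hij
  exact (s.orderIsoOfFin h).injective (Subtype.ext hij)

lemma enumF_surj {s : Finset (Fin k)} (h : s.card = m) (l0 : Fin k) {l : Fin k} (hl : l ∈ s) :
    ∃ i : Fin m, enumF s l0 i = l := by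
  refine ⟨(s.orderIsoOfFin h).symm ⟨l, hl⟩, ?_⟩
  simp only [enumF, dif_pos h, OrderIso.apply_symm_apply]

lemma image_enumF {s : Finset (Fin k)} (h : s.card = m) (l0 : Fin k) :
    Finset.image (enumF s l0 : Fin m → Fin k) Finset.univ = s := by
  ext l
  simp only [Finset.mem_image, Finset.mem_univ, true_and]
  constructor
  · rintro ⟨i, rfl⟩; exact enumF_mem h l0 i
  · intro hl; exact enumF_surj h l0 hl

/-- the injective encoding of an even tuple -/
noncomputable def encodeT (l0 : Fin k) (f : Fin k → Fin n) :
    (Fin m → Fin k) × (Fin m → Fin n) :=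
  (fun i => invo f (enumF (Lset f) l0 i), fun i => f (enumF (Lset f) l0 i))

lemma image_encodeT_fst (l0 : Fin k) {f : Fin k → Fin n} (hE : EvenFibers f)
    (h : (Lset f).card = m) :
    Finset.image ((encodeT l0 f : (Fin m → Fin k) × _).1) Finset.univ = Rset f := by
  show Finset.image ((invo f) ∘ (enumF (Lset f) l0)) Finset.univ = Rset f
  rw [← Finset.image_image, image_enumF h l0, ← Rset_eq_image hE]

lemma encodeT_prod (l0 : Fin k) (a : Fin n → ℝ) {f : Fin k → Fin n} (hE : EvenFibers f)
    (h : (Lset f).card = m) :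
    ∏ l, a (f l) = ∏ i : Fin m, a ((encodeT l0 f : _ × (Fin m → Fin n)).2 i) ^ 2 := by
  have h1 : ∏ l, a (f l) = (∏ l ∈ Lset f, a (f l)) * ∏ l ∈ Rset f, a (f l) := by
    rw [← Finset.prod_union Lset_disj_Rset, Lset_union_Rset hE]
  have h2 : ∏ l ∈ Rset f, a (f l) = ∏ l ∈ Lset f, a (f l) := by
    rw [Rset_eq_image hE, Finset.prod_image
      (fun x _ y _ hxy => invo_injective hE hxy)]
    exact Finset.prod_congr rfl fun l _ => by rw [f_invo f l]
  have h3 : ∏ l ∈ Lset f, a (f l) = ∏ i : Fin m, a (f (enumF (Lset f) l0 i)) := by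
    refine (Finset.prod_bij (fun (i : Fin m) _ => enumF (Lset f) l0 i)
      (fun i _ => enumF_mem h l0 i)
      (fun i _ j _ hij => enumF_inj h l0 hij)
      (fun l hl => ?_) (fun i _ => rfl)).symm
    obtain ⟨i, hi⟩ := enumF_surj h l0 hl
    exact ⟨i, Finset.mem_univ i, hi⟩
  rw [h1, h2, h3, ← Finset.prod_mul_distrib]
  exact Finset.prod_congr rfl fun i _ => (sq _).symm

lemma encodeT_inj (l0 : Fin k) (hm : k = 2 * m) {f f' : Fin k → Fin n}
    (hE : EvenFibers f) (hE' : EvenFibers f')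
    (heq : (encodeT l0 f : (Fin m → Fin k) × (Fin m → Fin n)) = encodeT l0 f') : f = f' := by
  have hcf : (Lset f).card = m := card_Lset hE (by simp [hm])
  have hcf' : (Lset f').card = m := card_Lset hE' (by simp [hm])
  have hR : Rset f = Rset f' := by
    rw [← image_encodeT_fst l0 hE hcf, ← image_encodeT_fst l0 hE' hcf', heq]
  have hL : Lset f = Lset f' := by
    rw [Lset_eq_sdiff hE, Lset_eq_sdiff hE', hR]
  have hsnd := congrArg Prod.snd heq
  have hfst := congrArg Prod.fst heq
  have henum : enumF (Lset f) l0 = (enumF (Lset f') l0 : Fin m → Fin k) := by rw [hL]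
  funext l
  have hl : l ∈ Lset f ∪ Rset f := by rw [Lset_union_Rset hE]; exact Finset.mem_univ l
  rcases Finset.mem_union.mp hl with hl | hl
  · obtain ⟨i, hi⟩ := enumF_surj hcf l0 hl
    have e1 : f l = (encodeT l0 f : _ × (Fin m → Fin n)).2 i := by
      simp only [encodeT, hi]
    have e2 : (encodeT l0 f' : _ × (Fin m → Fin n)).2 i = f' l := by
      simp only [encodeT, ← henum, hi]
    rw [e1, hsnd, e2]
  · have : l ∈ Finset.image ((encodeT l0 f : (Fin m → Fin k) × _).1) Finset.univ := by
      rw [image_encodeT_fst l0 hE hcf]; exact hl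
    obtain ⟨i, -, hi⟩ := Finset.mem_image.mp this
    have e1 : f l = f (enumF (Lset f) l0 i) := by
      rw [← hi]; exact f_invo f (enumF (Lset f) l0 i)
    have e2 : f' l = f' (enumF (Lset f') l0 i) := by
      have hi' : (encodeT l0 f' : (Fin m → Fin k) × _).1 i = l := by rw [← heq]; exact hi
      rw [← hi']; exact f_invo f' (enumF (Lset f') l0 i)
    have e3 : f (enumF (Lset f) l0 i) = (encodeT l0 f : _ × (Fin m → Fin n)).2 i := rfl
    have e4 : f' (enumF (Lset f') l0 i) = (encodeT l0 f' : _ × (Fin m → Fin n)).2 i := rfl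
    rw [e1, e2, e3, e4, heq]

/-- key moment bound: sum over even tuples of products is at most `k^m * (∑ a²)^m`. -/
lemma even_sum_bound (hk : 0 < k) (hm : k = 2 * m) (a : Fin n → ℝ) :
    ∑ f ∈ Finset.univ.filter (fun f : Fin k → Fin n => EvenFibers f), ∏ l, a (f l)
      ≤ (k : ℝ) ^ m * (∑ j, a j ^ 2) ^ m := by
  classical
  set l0 : Fin k := ⟨0, hk⟩
  set g : ((Fin m → Fin k) × (Fin m → Fin n)) → ℝ := fun y => ∏ i, a (y.2 i) ^ 2 with hg
  have step1 : ∑ f ∈ Finset.univ.filter (fun f : Fin k → Fin n => EvenFibers f), ∏ l, a (f l)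
      = ∑ f ∈ Finset.univ.filter (fun f : Fin k → Fin n => EvenFibers f),
          g (encodeT l0 f) := by
    refine Finset.sum_congr rfl fun f hf => ?_
    have hE : EvenFibers f := (Finset.mem_filter.mp hf).2
    exact encodeT_prod l0 a hE (card_Lset hE (by simp [hm]))
  rw [step1, ← Finset.sum_image (g := fun f => (encodeT l0 f : (Fin m → Fin k) × (Fin m → Fin n)))
    (fun f hf f' hf' h => encodeT_inj l0 hm (Finset.mem_filter.mp hf).2
      (Finset.mem_filter.mp hf').2 h)]
  have step2 : ∑ y ∈ Finset.image (fun f => (encodeT l0 f : (Fin m → Fin k) × (Fin m → Fin n)))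
        (Finset.univ.filter (fun f : Fin k → Fin n => EvenFibers f)), g y
      ≤ ∑ y : (Fin m → Fin k) × (Fin m → Fin n), g y := by
    refine Finset.sum_le_sum_of_subset_of_nonneg (Finset.subset_univ _) fun y _ _ => ?_
    exact Finset.prod_nonneg fun i _ => sq_nonneg _
  refine step2.trans ?_
  rw [Fintype.sum_prod_type]
  have step3 : ∀ gg : Fin m → Fin k, ∑ h : Fin m → Fin n, g (gg, h) = (∑ j, a j ^ 2) ^ m := by
    intro gg
    have : (∑ j, a j ^ 2) ^ m = ∏ _i : Fin m, (∑ j ∈ Finset.univ, a j ^ 2) := by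
      rw [Finset.prod_const, Finset.card_univ, Fintype.card_fin]
    rw [this, Finset.prod_univ_sum, Fintype.piFinset_univ]
  apply le_of_eq
  calc ∑ gg : Fin m → Fin k, ∑ h : Fin m → Fin n, g (gg, h)
      = ∑ _gg : Fin m → Fin k, (∑ j, a j ^ 2) ^ m := by
        exact Finset.sum_congr rfl fun gg _ => step3 gg
    _ = (k : ℝ) ^ m * (∑ j, a j ^ 2) ^ m := by
        rw [Finset.sum_const, Finset.card_univ]
        simp [Fintype.card_fun, mul_comm]
  done
end


lemma signBit_not (b : Bool) : signBit (!b) = - signBit b := by cases b <;> simp [signBit]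

lemma signBit_pow (b : Bool) (c : ℕ) :
    signBit b ^ c = if Even c then 1 else signBit b := by
  cases b
  · show (-1 : ℝ) ^ c = if Even c then 1 else (-1 : ℝ)
    by_cases h : Even c
    · rw [if_pos h, h.neg_one_pow]
    · rw [if_neg h, (Nat.not_even_iff_odd.mp h).neg_one_pow]
  · simp [signBit]

lemma signBit_sq (b : Bool) : signBit b ^ 2 = 1 := by cases b <;> simp [signBit]

section
variable {n k : ℕ} (p : (Fin n → Bool) → ℝ)

/-- expectation of a product of at most `k` distinct signs vanishes -/
lemma expect_signs
    (hkwise : ∀ T : Finset (Fin n), T.card ≤ k → ∀ g : Fin n → Bool,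
      ∑ x ∈ Finset.univ.filter (fun x : Fin n → Bool => ∀ i ∈ T, x i = g i), p x
        = (1 / 2 : ℝ) ^ T.card)
    (T : Finset (Fin n)) (hT : T.card ≤ k) (hTne : T.Nonempty) :
    ∑ x, p x * ∏ j ∈ T, signBit (x j) = 0 := by
  classical
  set φ : (Fin n → Bool) → (Fin n → Bool) := fun x i => if i ∈ T then x i else false with hφ
  have hfib : ∑ x, p x * ∏ j ∈ T, signBit (x j)
      = ∑ g : Fin n → Bool, ∑ x ∈ Finset.univ.filter (fun x => φ x = g),
          p x * ∏ j ∈ T, signBit (x j) := by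
    rw [Finset.sum_fiberwise]
  rw [hfib]
  have key : ∀ g : Fin n → Bool,
      ∑ x ∈ Finset.univ.filter (fun x => φ x = g), p x * ∏ j ∈ T, signBit (x j)
      = if (∀ i, i ∉ T → g i = false)
          then (1 / 2 : ℝ) ^ T.card * ∏ j ∈ T, signBit (g j) else 0 := by
    intro g
    by_cases hg : ∀ i, i ∉ T → g i = false
    · rw [if_pos hg]
      have hfilter : (Finset.univ.filter (fun x => φ x = g))
          = Finset.univ.filter (fun x : Fin n → Bool => ∀ i ∈ T, x i = g i) := by
        ext x
        simp only [Finset.mem_filter, Finset.mem_univ, true_and]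
        constructor
        · intro h i hi
          rw [← congrFun h i]; simp [hφ, hi]
        · intro h
          funext i
          by_cases hi : i ∈ T
          · simp [hφ, hi, h i hi]
          · simp [hφ, hi, hg i hi]
      have hprod : ∀ x ∈ Finset.univ.filter (fun x : Fin n → Bool => ∀ i ∈ T, x i = g i),
          p x * ∏ j ∈ T, signBit (x j) = p x * ∏ j ∈ T, signBit (g j) := by
        intro x hx
        congr 1
        exact Finset.prod_congr rfl fun j hj =>
          by rw [(Finset.mem_filter.mp hx).2 j hj]
      rw [hfilter, Finset.sum_congr rfl hprod, ← Finset.sum_mul, hkwise T hT g, mul_comm]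
    · rw [if_neg hg]
      push_neg at hg
      obtain ⟨i, hiT, hgi⟩ := hg
      apply Finset.sum_eq_zero
      intro x hx
      exfalso
      have := (Finset.mem_filter.mp hx).2
      have : φ x i = g i := congrFun this i
      simp only [hφ, if_neg hiT] at this
      exact hgi this.symm
  rw [Finset.sum_congr rfl fun g _ => key g]
  rw [Finset.sum_ite, Finset.sum_const_zero, add_zero, ← Finset.mul_sum]
  obtain ⟨t, ht⟩ := hTne
  have hzero : ∑ g ∈ Finset.univ.filter (fun g : Fin n → Bool => ∀ i, i ∉ T → g i = false),
      ∏ j ∈ T, signBit (g j) = 0 := by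
    refine Finset.sum_involution
      (fun g _ => Function.update g t (!(g t))) ?_ ?_ ?_ ?_
    · intro g hg
      have h1 : ∏ j ∈ T, signBit (g j) = signBit (g t) * ∏ j ∈ T.erase t, signBit (g j) :=
        (Finset.mul_prod_erase T _ ht).symm
      have h2 : ∏ j ∈ T, signBit (Function.update g t (!(g t)) j)
          = signBit (!(g t)) * ∏ j ∈ T.erase t, signBit (g j) := by
        rw [← Finset.mul_prod_erase T _ ht, Function.update_self]
        congr 1
        exact Finset.prod_congr rfl fun j hj => by
          rw [Function.update_of_ne (Finset.ne_of_mem_erase hj)]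
      rw [h1, h2, signBit_not]
      ring
    · intro g hg _
      intro hcontra
      have h := congrFun hcontra t
      simp only [Function.update_self] at h
      exact Bool.not_ne_self (g t) h
    · intro g hg
      simp only [Finset.mem_filter, Finset.mem_univ, true_and] at hg ⊢
      intro i hi
      rw [Function.update_of_ne (fun h : i = t => hi (h ▸ ht))]
      exact hg i hi
    · intro g hg
      simp only [Function.update_self, Function.update_idem, Bool.not_not,
        Function.update_eq_self]
  rw [hzero, mul_zero]
end
lemma expect_pow {n k : ℕ} (p : (Fin n → Bool) → ℝ)
    (hp1 : ∑ x, p x = 1)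
    (hkwise : ∀ T : Finset (Fin n), T.card ≤ k → ∀ g : Fin n → Bool,
      ∑ x ∈ Finset.univ.filter (fun x : Fin n → Bool => ∀ i ∈ T, x i = g i), p x
        = (1 / 2 : ℝ) ^ T.card)
    (a : Fin n → ℝ) :
    ∑ x, p x * (∑ j, a j * signBit (x j)) ^ k
      = ∑ f ∈ Finset.univ.filter (fun f : Fin k → Fin n => EvenFibers f), ∏ l, a (f l) := by
  classical
  have hexp : ∀ x : Fin n → Bool, (∑ j, a j * signBit (x j)) ^ k
      = ∑ f : Fin k → Fin n, (∏ l, a (f l)) * ∏ l, signBit (x (f l)) := by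
    intro x
    have h1 : (∑ j, a j * signBit (x j)) ^ k
        = ∏ _l : Fin k, (∑ j ∈ Finset.univ, a j * signBit (x j)) := by
      rw [Finset.prod_const, Finset.card_univ, Fintype.card_fin]
    rw [h1, Finset.prod_univ_sum, Fintype.piFinset_univ]
    exact Finset.sum_congr rfl fun f _ => Finset.prod_mul_distrib
  have inner : ∀ f : Fin k → Fin n,
      ∑ x, p x * ∏ l, signBit (x (f l)) = if EvenFibers f then 1 else 0 := by
    intro f
    set T : Finset (Fin n) := (Finset.image f Finset.univ).filter
      (fun b => ¬ Even ((Finset.univ.filter fun l => f l = b)).card) with hT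
    have hcomp : ∀ x : Fin n → Bool,
        ∏ l, signBit (x (f l)) = ∏ b ∈ T, signBit (x b) := by
      intro x
      rw [Finset.prod_comp (fun b => signBit (x b)) f]
      rw [Finset.prod_filter]
      refine Finset.prod_congr rfl fun b _ => ?_
      rw [signBit_pow]
      by_cases h : Even ((Finset.univ.filter fun l => f l = b)).card
      · rw [if_pos h, if_neg (not_not_intro h)]
      · rw [if_neg h, if_pos h]
    by_cases hE : EvenFibers f
    · have hTempty : T = ∅ := by
        rw [hT, Finset.filter_eq_empty_iff]
        intro b _
        exact not_not_intro (hE b)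
      rw [if_pos hE]
      calc ∑ x, p x * ∏ l, signBit (x (f l))
          = ∑ x, p x * ∏ b ∈ T, signBit (x b) :=
            Finset.sum_congr rfl fun x _ => by rw [hcomp x]
        _ = ∑ x, p x := by
            rw [hTempty]; simp
        _ = 1 := hp1
    · rw [if_neg hE]
      have hTne : T.Nonempty := by
        rw [EvenFibers] at hE
        push_neg at hE
        obtain ⟨b, hb⟩ := hE
        have hbim : b ∈ Finset.image f Finset.univ := by
          by_contra hbim
          apply hb
          have : (Finset.univ.filter fun l => f l = b) = ∅ := by
            rw [Finset.filter_eq_empty_iff]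
            intro l _
            intro hfl
            exact hbim (Finset.mem_image.mpr ⟨l, Finset.mem_univ l, hfl⟩)
          rw [this]
          simp
        exact ⟨b, Finset.mem_filter.mpr ⟨hbim, hb⟩⟩
      have hTcard : T.card ≤ k := by
        refine le_trans (Finset.card_filter_le _ _) (le_trans Finset.card_image_le ?_)
        simp
      calc ∑ x, p x * ∏ l, signBit (x (f l))
          = ∑ x, p x * ∏ b ∈ T, signBit (x b) :=
            Finset.sum_congr rfl fun x _ => by rw [hcomp x]
        _ = 0 := expect_signs p hkwise T hTcard hTne
  calc ∑ x, p x * (∑ j, a j * signBit (x j)) ^ k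
      = ∑ x, ∑ f : Fin k → Fin n, (∏ l, a (f l)) * (p x * ∏ l, signBit (x (f l))) := by
        refine Finset.sum_congr rfl fun x _ => ?_
        rw [hexp x, Finset.mul_sum]
        exact Finset.sum_congr rfl fun f _ => by ring
    _ = ∑ f : Fin k → Fin n, (∏ l, a (f l)) * ∑ x, p x * ∏ l, signBit (x (f l)) := by
        rw [Finset.sum_comm]
        exact Finset.sum_congr rfl fun f _ => by rw [Finset.mul_sum]
    _ = ∑ f : Fin k → Fin n, (∏ l, a (f l)) * (if EvenFibers f then 1 else 0) :=
        Finset.sum_congr rfl fun f _ => by rw [inner f]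
    _ = ∑ f ∈ Finset.univ.filter (fun f : Fin k → Fin n => EvenFibers f), ∏ l, a (f l) := by
        rw [Finset.sum_filter]
        exact Finset.sum_congr rfl fun f _ => by
          by_cases hE : EvenFibers f
          · rw [if_pos hE, if_pos hE, mul_one]
          · rw [if_neg hE, if_neg hE, mul_zero]

lemma orth_norm {n : ℕ} (H : Matrix (Fin n) (Fin n) ℝ) (hHorth : Hᵀ * H = 1)
    (u : Fin n → ℝ) : ∑ i, (H.mulVec u) i ^ 2 = ∑ j, u j ^ 2 := by
  have key : ∀ j l, ∑ i, H i j * H i l = if j = l then (1:ℝ) else 0 := by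
    intro j l
    have h := congrFun (congrFun hHorth j) l
    simpa [Matrix.mul_apply, Matrix.transpose_apply, Matrix.one_apply] using h
  calc ∑ i, (H.mulVec u) i ^ 2
      = ∑ i, ∑ j, ∑ l, (H i j * u j) * (H i l * u l) := by
        refine Finset.sum_congr rfl fun i _ => ?_
        rw [sq]
        simp only [Matrix.mulVec, dotProduct]
        rw [Finset.sum_mul_sum]
    _ = ∑ j, ∑ l, (u j * u l) * ∑ i, H i j * H i l := by
        rw [Finset.sum_comm]
        refine Finset.sum_congr rfl fun j _ => ?_
        rw [Finset.sum_comm]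
        refine Finset.sum_congr rfl fun l _ => ?_
        rw [Finset.mul_sum]
        exact Finset.sum_congr rfl fun i _ => by ring
    _ = ∑ j, u j ^ 2 := by
        refine Finset.sum_congr rfl fun j _ => ?_
        rw [Finset.sum_congr rfl fun l (_ : l ∈ Finset.univ) => by rw [key j l]]
        simp [Finset.sum_ite_eq, sq]

set_option maxHeartbeats 2000000 in
/-- Dimension reduction lemma: for a sampler collection `𝒮` (for `[0, n^(1/4)]`-valued
functions) and a `k`-wise independent sign distribution, the random map
`A_{S,x} = √(n/s) P_S H D(x)` satisfies, for every unit vector `w`,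
`Pr_{S,x}[ |‖A_{S,x} w‖² - 1| ≥ ε ] ≤ δ + k^(k/2)/n^(k/8-1)`. -/
theorem stmt_5 (n s k : ℕ) (hn : 0 < n) (hs : 0 < s) (hk : 0 < k) (hke : Even k)
    (ε δ : ℝ) (hε : 0 < ε) (hδ : 0 < δ)
    (H : Matrix (Fin n) (Fin n) ℝ)
    (hHent : ∀ i j, H i j = 1 / Real.sqrt n ∨ H i j = -(1 / Real.sqrt n))
    (hHorth : Hᵀ * H = 1)
    (𝒮 : Finset (Finset (Fin n))) (h𝒮ne : 𝒮.Nonempty)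
    (hcard : ∀ S ∈ 𝒮, S.card = s)
    (hsampler : ∀ f : Fin n → ℝ, (∀ i, 0 ≤ f i ∧ f i ≤ (n : ℝ) ^ ((1 : ℝ) / 4)) →
      ((𝒮.filter (fun S => ε <
          |(1 / (s : ℝ)) * ∑ i ∈ S, f i - (1 / (n : ℝ)) * ∑ i, f i|)).card : ℝ)
        ≤ δ * 𝒮.card)
    (p : (Fin n → Bool) → ℝ) (hp0 : ∀ x, 0 ≤ p x) (hp1 : ∑ x, p x = 1)
    (hkwise : ∀ T : Finset (Fin n), T.card ≤ k → ∀ g : Fin n → Bool,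
      ∑ x ∈ Finset.univ.filter (fun x : Fin n → Bool => ∀ i ∈ T, x i = g i), p x
        = (1 / 2 : ℝ) ^ T.card)
    (w : Fin n → ℝ) (hw : ∑ i, w i ^ 2 = 1) :
    ∑ S ∈ 𝒮, ∑ x ∈ Finset.univ.filter (fun x : Fin n → Bool =>
        ε ≤ |((n : ℝ) / s) *
            (∑ i ∈ S, (H.mulVec (fun j => signBit (x j) * w j)) i ^ 2) - 1|), p x
      ≤ (δ + (k : ℝ) ^ ((k : ℝ) / 2) / (n : ℝ) ^ ((k : ℝ) / 8 - 1)) * 𝒮.card := by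
  classical
  obtain ⟨m, hmk⟩ := hke
  have hm2 : k = 2 * m := by omega
  have hm1 : 1 ≤ m := by omega
  set N : ℝ := (n : ℝ) with hNdef
  have hN0 : (0:ℝ) < N := by rw [hNdef]; exact_mod_cast hn
  set v : (Fin n → Bool) → Fin n → ℝ :=
    fun x => H.mulVec (fun j => signBit (x j) * w j) with hvdef
  -- Part A : norm preservation
  have hA : ∀ x, ∑ i, v x i ^ 2 = 1 := by
    intro x
    rw [hvdef, orth_norm H hHorth]
    calc ∑ j, (signBit (x j) * w j) ^ 2 = ∑ j, w j ^ 2 := by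
          refine Finset.sum_congr rfl fun j _ => ?_
          rw [mul_pow, signBit_sq, one_mul]
      _ = 1 := hw
  -- entries squared
  have hHsq : ∀ i j, H i j ^ 2 = 1 / N := by
    intro i j
    have hsqrt : Real.sqrt N ^ 2 = N := Real.sq_sqrt hN0.le
    rcases hHent i j with h | h
    · rw [h, div_pow, one_pow, hsqrt]
    · rw [h, neg_sq, div_pow, one_pow, hsqrt]
  -- moment bound
  have hmom : ∀ i : Fin n, ∑ x, p x * (v x i) ^ k ≤ (k:ℝ)^m * (1/N)^m := by
    intro i
    set a : Fin n → ℝ := fun j => H i j * w j with hadef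
    have hrepr : ∀ x, v x i = ∑ j, a j * signBit (x j) := by
      intro x
      rw [hvdef]
      show ∑ j, H i j * (signBit (x j) * w j) = _
      exact Finset.sum_congr rfl fun j _ => by rw [hadef]; ring
    have hsum_a : ∑ j, a j ^ 2 = 1 / N := by
      calc ∑ j, a j ^ 2 = ∑ j, (1/N) * w j ^ 2 := by
            refine Finset.sum_congr rfl fun j _ => ?_
            rw [hadef, mul_pow, hHsq i j]
        _ = 1 / N := by rw [← Finset.mul_sum, hw, mul_one]
    calc ∑ x, p x * (v x i) ^ k
        = ∑ x, p x * (∑ j, a j * signBit (x j)) ^ k := by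
          refine Finset.sum_congr rfl fun x _ => ?_
          rw [hrepr x]
      _ = ∑ f ∈ Finset.univ.filter (fun f : Fin k → Fin n => EvenFibers f),
            ∏ l, a (f l) := expect_pow p hp1 hkwise a
      _ ≤ (k:ℝ)^m * (∑ j, a j ^ 2)^m := even_sum_bound hk hm2 a
      _ = (k:ℝ)^m * (1/N)^m := by rw [hsum_a]
  -- bad events
  set Irr : (Fin n → Bool) → Prop :=
    fun x => ∃ i, N ^ ((1:ℝ)/4) ≤ N * (v x i)^2 with hIrrdef
  set Bad : Fin n → Finset (Fin n → Bool) :=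
    fun i => Finset.univ.filter (fun x => N ^ ((1:ℝ)/4) ≤ N * (v x i)^2) with hBaddef
  -- Markov per coordinate
  have hBadi : ∀ i, ∑ x ∈ Bad i, p x ≤ (k:ℝ)^m * (N ^ (-(1:ℝ)/4))^m := by
    intro i
    set t2 : ℝ := N ^ ((1:ℝ)/4 - 1) with ht2
    have ht2pos : 0 < t2 := Real.rpow_pos_of_pos hN0 _
    have hlower : ∀ x ∈ Bad i, t2 ≤ (v x i)^2 := by
      intro x hx
      have hx' := (Finset.mem_filter.mp hx).2
      rw [ht2, Real.rpow_sub hN0, Real.rpow_one, div_le_iff₀ hN0]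
      linarith [hx']
    have hpowk : ∀ y : ℝ, y ^ k = (y^2)^m := by
      intro y; rw [hm2, pow_mul]
    have hpow : ∀ x ∈ Bad i, t2^m ≤ (v x i)^k := by
      intro x hx
      rw [hpowk]
      exact pow_le_pow_left₀ ht2pos.le (hlower x hx) m
    have hmarkov : t2^m * ∑ x ∈ Bad i, p x ≤ ∑ x, p x * (v x i)^k := by
      rw [Finset.mul_sum]
      calc ∑ x ∈ Bad i, t2^m * p x ≤ ∑ x ∈ Bad i, p x * (v x i)^k := by
            refine Finset.sum_le_sum fun x hx => ?_
            rw [mul_comm]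
            exact mul_le_mul_of_nonneg_left (hpow x hx) (hp0 x)
        _ ≤ ∑ x, p x * (v x i)^k := by
            refine Finset.sum_le_sum_of_subset_of_nonneg (Finset.filter_subset _ _) ?_
            intro x _ _
            rw [hpowk]
            exact mul_nonneg (hp0 x) (pow_nonneg (sq_nonneg _) m)
    have h1 : ∑ x ∈ Bad i, p x ≤ ((k:ℝ)^m * (1/N)^m) / t2^m := by
      rw [le_div_iff₀ (pow_pos ht2pos m)]
      calc (∑ x ∈ Bad i, p x) * t2^m = t2^m * ∑ x ∈ Bad i, p x := mul_comm _ _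
        _ ≤ ∑ x, p x * (v x i)^k := hmarkov
        _ ≤ (k:ℝ)^m * (1/N)^m := hmom i
    refine h1.trans (le_of_eq ?_)
    rw [mul_div_assoc, ← div_pow]
    congr 1
    rw [ht2, one_div, ← Real.rpow_neg_one N, ← Real.rpow_sub hN0]
    norm_num
  -- union bound
  have hIrrBound : ∑ x ∈ Finset.univ.filter Irr, p x
      ≤ (k : ℝ) ^ ((k : ℝ) / 2) / N ^ ((k : ℝ) / 8 - 1) := by
    have hunion : ∑ x ∈ Finset.univ.filter Irr, p x ≤ ∑ i : Fin n, ∑ x ∈ Bad i, p x := by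
      have hnn : ∀ (x : Fin n → Bool) (j : Fin n), 0 ≤ (if x ∈ Bad j then p x else 0) := by
        intro x j
        split <;> simp [hp0 x]
      calc ∑ x ∈ Finset.univ.filter Irr, p x
          ≤ ∑ x ∈ Finset.univ.filter Irr, ∑ i : Fin n, (if x ∈ Bad i then p x else 0) := by
            refine Finset.sum_le_sum fun x hx => ?_
            obtain ⟨i, hi⟩ := (Finset.mem_filter.mp hx).2
            have hxB : x ∈ Bad i := Finset.mem_filter.mpr ⟨Finset.mem_univ x, hi⟩
            calc p x = (if x ∈ Bad i then p x else 0) := by rw [if_pos hxB]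
              _ ≤ ∑ i : Fin n, (if x ∈ Bad i then p x else 0) :=
                  Finset.single_le_sum (fun j _ => hnn x j) (Finset.mem_univ i)
        _ = ∑ i : Fin n, ∑ x ∈ Finset.univ.filter Irr, (if x ∈ Bad i then p x else 0) :=
            Finset.sum_comm
        _ ≤ ∑ i : Fin n, ∑ x ∈ Bad i, p x := by
            refine Finset.sum_le_sum fun i _ => ?_
            rw [← Finset.sum_filter]
            refine Finset.sum_le_sum_of_subset_of_nonneg ?_ (fun x _ _ => hp0 x)
            intro x hx
            exact (Finset.mem_filter.mp hx).2
    have hsum2 : ∑ i : Fin n, ∑ x ∈ Bad i, p x ≤ N * ((k:ℝ)^m * (N ^ (-(1:ℝ)/4))^m) := by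
      calc ∑ i : Fin n, ∑ x ∈ Bad i, p x
          ≤ ∑ _i : Fin n, (k:ℝ)^m * (N ^ (-(1:ℝ)/4))^m :=
            Finset.sum_le_sum fun i _ => hBadi i
        _ = N * ((k:ℝ)^m * (N ^ (-(1:ℝ)/4))^m) := by
            rw [Finset.sum_const, Finset.card_univ, Fintype.card_fin, nsmul_eq_mul, hNdef]
    refine (hunion.trans hsum2).trans (le_of_eq ?_)
    have e1 : (k:ℝ) ^ ((k:ℝ)/2) = (k:ℝ)^m := by
      rw [show (k:ℝ)/2 = ((m:ℕ):ℝ) by rw [hm2]; push_cast; ring]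
      exact Real.rpow_natCast _ m
    have e2 : (N ^ (-(1:ℝ)/4))^m = N ^ (-((m:ℝ)/4)) := by
      rw [← Real.rpow_natCast (N ^ (-(1:ℝ)/4)) m, ← Real.rpow_mul hN0.le]
      congr 1; ring
    rw [e2, e1]
    calc N * ((k:ℝ)^m * N ^ (-((m:ℝ)/4)))
        = (k:ℝ)^m * (N ^ (1:ℝ) * N ^ (-((m:ℝ)/4))) := by rw [Real.rpow_one]; ring
      _ = (k:ℝ)^m * N ^ ((1:ℝ) + -((m:ℝ)/4)) := by rw [← Real.rpow_add hN0]
      _ = (k:ℝ)^m * N ^ (-((k:ℝ)/8 - 1)) := by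
          congr 1
          congr 1
          rw [hm2]; push_cast; ring
      _ = (k:ℝ)^m / N ^ ((k:ℝ)/8 - 1) := by
          rw [Real.rpow_neg hN0.le]; ring
  -- sampler for regular x
  have hreg : ∀ x : Fin n → Bool, ¬ Irr x →
      ((𝒮.filter (fun S => ε ≤ |(N / s) * (∑ i ∈ S, v x i ^ 2) - 1|)).card : ℝ)
        ≤ δ * 𝒮.card := by
    intro x hIx
    haveI : Nonempty (Fin n) := ⟨⟨0, hn⟩⟩
    have hIx' : ∀ i, N * (v x i)^2 < N ^ ((1:ℝ)/4) := by
      intro i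
      by_contra hcon
      exact hIx ⟨i, not_lt.mp hcon⟩
    set M : ℝ := N ^ ((1:ℝ)/4) with hM
    have hMpos : 0 < M := Real.rpow_pos_of_pos hN0 _
    set B : ℝ := max (M/2) (Finset.univ.sup' Finset.univ_nonempty fun i => N * (v x i)^2)
      with hB
    have hBpos : 0 < B := lt_of_lt_of_le (half_pos hMpos) (le_max_left _ _)
    have hBlt : B < M :=
      max_lt (half_lt_self hMpos) ((Finset.sup'_lt_iff _).mpr fun i _ => hIx' i)
    have hBle : ∀ i, N * (v x i)^2 ≤ B := fun i =>
      le_trans (Finset.le_sup' (fun i => N * (v x i)^2) (Finset.mem_univ i)) (le_max_right _ _)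
    set lam : ℝ := M / B with hlam
    have hlam1 : 1 < lam := (one_lt_div hBpos).mpr hBlt
    have hlam0 : 0 < lam := lt_trans one_pos hlam1
    set f : Fin n → ℝ := fun i => lam * (N * (v x i)^2) with hfdef
    have hsumS : ∀ S : Finset (Fin n), ∑ i ∈ S, f i = lam * (N * ∑ i ∈ S, (v x i)^2) := by
      intro S
      simp only [hfdef]
      rw [← Finset.mul_sum, ← Finset.mul_sum]
    have hfbounds : ∀ i, 0 ≤ f i ∧ f i ≤ (n:ℝ) ^ ((1:ℝ)/4) := by
      intro i
      constructor
      · exact mul_nonneg hlam0.le (mul_nonneg hN0.le (sq_nonneg _))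
      · show f i ≤ M
        calc f i ≤ lam * B := mul_le_mul_of_nonneg_left (hBle i) hlam0.le
          _ = M := by rw [hlam]; exact div_mul_cancel₀ M hBpos.ne'
    have happ := hsampler f hfbounds
    refine le_trans ?_ happ
    have hsubset : (𝒮.filter (fun S => ε ≤ |(N / s) * (∑ i ∈ S, v x i ^ 2) - 1|))
        ⊆ (𝒮.filter (fun S => ε <
            |(1 / (s : ℝ)) * ∑ i ∈ S, f i - (1 / (n : ℝ)) * ∑ i, f i|)) := by
      intro S hS
      obtain ⟨hS1, hS2⟩ := Finset.mem_filter.mp hS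
      refine Finset.mem_filter.mpr ⟨hS1, ?_⟩
      have e1 : (1/(s:ℝ)) * ∑ i ∈ S, f i = lam * ((N/s) * ∑ i ∈ S, (v x i)^2) := by
        rw [hsumS S]; ring
      have e2 : (1/(n:ℝ)) * ∑ i, f i = lam := by
        rw [hsumS Finset.univ, hA x, mul_one, ← hNdef]
        field_simp
      rw [e1, e2]
      have e3 : lam * ((N/s) * ∑ i ∈ S, (v x i)^2) - lam
          = lam * ((N/s) * (∑ i ∈ S, (v x i)^2) - 1) := by ring
      rw [e3, abs_mul, abs_of_pos hlam0]
      have habs : 0 < |(N/s) * (∑ i ∈ S, (v x i)^2) - 1| := lt_of_lt_of_le hε hS2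
      calc ε ≤ |(N/s) * (∑ i ∈ S, (v x i)^2) - 1| := hS2
        _ < lam * |(N/s) * (∑ i ∈ S, (v x i)^2) - 1| :=
            (lt_mul_iff_one_lt_left habs).mpr hlam1
    exact_mod_cast Finset.card_le_card hsubset
  -- assembly
  show ∑ S ∈ 𝒮, ∑ x ∈ Finset.univ.filter (fun x : Fin n → Bool =>
        ε ≤ |(N / s) * (∑ i ∈ S, v x i ^ 2) - 1|), p x
      ≤ (δ + (k : ℝ) ^ ((k : ℝ) / 2) / N ^ ((k : ℝ) / 8 - 1)) * 𝒮.card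
  set badc : Finset (Fin n) → (Fin n → Bool) → Prop :=
    fun S x => ε ≤ |(N / s) * (∑ i ∈ S, v x i ^ 2) - 1| with hbadcdef
  have hswap : ∑ S ∈ 𝒮, ∑ x ∈ Finset.univ.filter (fun x => badc S x), p x
      = ∑ x, ((𝒮.filter (fun S => badc S x)).card : ℝ) * p x := by
    calc ∑ S ∈ 𝒮, ∑ x ∈ Finset.univ.filter (fun x => badc S x), p x
        = ∑ S ∈ 𝒮, ∑ x, if badc S x then p x else 0 := by
          exact Finset.sum_congr rfl fun S _ => Finset.sum_filter _ _
      _ = ∑ x, ∑ S ∈ 𝒮, if badc S x then p x else 0 := Finset.sum_comm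
      _ = ∑ x, ((𝒮.filter (fun S => badc S x)).card : ℝ) * p x := by
          refine Finset.sum_congr rfl fun x _ => ?_
          rw [← Finset.sum_filter, Finset.sum_const, nsmul_eq_mul]
  show ∑ S ∈ 𝒮, ∑ x ∈ Finset.univ.filter (fun x => badc S x), p x ≤ _
  rw [hswap, ← Finset.sum_filter_add_sum_filter_not Finset.univ Irr
    (fun x => ((𝒮.filter (fun S => badc S x)).card : ℝ) * p x)]
  set err : ℝ := (k : ℝ) ^ ((k : ℝ) / 2) / N ^ ((k : ℝ) / 8 - 1) with herrdef
  have herr0 : 0 ≤ err := by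
    rw [herrdef]
    positivity
  have h1 : ∑ x ∈ Finset.univ.filter Irr,
      ((𝒮.filter (fun S => badc S x)).card : ℝ) * p x ≤ err * 𝒮.card := by
    calc ∑ x ∈ Finset.univ.filter Irr, ((𝒮.filter (fun S => badc S x)).card : ℝ) * p x
        ≤ ∑ x ∈ Finset.univ.filter Irr, (𝒮.card : ℝ) * p x := by
          refine Finset.sum_le_sum fun x _ => ?_
          refine mul_le_mul_of_nonneg_right ?_ (hp0 x)
          exact_mod_cast Finset.card_filter_le 𝒮 _
      _ = (𝒮.card : ℝ) * ∑ x ∈ Finset.univ.filter Irr, p x := by rw [Finset.mul_sum]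
      _ ≤ (𝒮.card : ℝ) * err := by
          refine mul_le_mul_of_nonneg_left ?_ (Nat.cast_nonneg _)
          exact hIrrBound
      _ = err * 𝒮.card := mul_comm _ _
  have h2 : ∑ x ∈ Finset.univ.filter (fun x => ¬ Irr x),
      ((𝒮.filter (fun S => badc S x)).card : ℝ) * p x ≤ δ * 𝒮.card := by
    calc ∑ x ∈ Finset.univ.filter (fun x => ¬ Irr x),
        ((𝒮.filter (fun S => badc S x)).card : ℝ) * p x
        ≤ ∑ x ∈ Finset.univ.filter (fun x => ¬ Irr x), (δ * 𝒮.card) * p x := by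
          refine Finset.sum_le_sum fun x hx => ?_
          refine mul_le_mul_of_nonneg_right ?_ (hp0 x)
          exact hreg x (Finset.mem_filter.mp hx).2
      _ = (δ * 𝒮.card) * ∑ x ∈ Finset.univ.filter (fun x => ¬ Irr x), p x := by
          rw [Finset.mul_sum]
      _ ≤ (δ * 𝒮.card) * 1 := by
          refine mul_le_mul_of_nonneg_left ?_ (by positivity)
          have hle : ∑ x ∈ Finset.univ.filter (fun x => ¬ Irr x), p x ≤ ∑ x, p x :=
            Finset.sum_le_sum_of_subset_of_nonneg (Finset.filter_subset _ _)
              (fun x _ _ => hp0 x)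
          linarith [hp1]
      _ = δ * 𝒮.card := mul_one _
  have hfinal : (δ + err) * (𝒮.card : ℝ) = err * 𝒮.card + δ * 𝒮.card := by ring
  rw [hfinal]
  exact add_le_add h1 h2
end
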